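/- arXiv:1809.06759 — 2 statements merged into one kernel-verified Lean document; each statement's English description precedes it below -/
import Mathlib

section
/- Let T be the prae-dilator with T_X = {⊥} ∪ X ∪ {Ω+x : x ∈ X} as described. If X is a linear order and ϑ : T_X → X is a Bachmann-Howard collapse, then there is an order embedding f : ω^ω → X; it can be defined by recursion via f(0) = ϑ(⊥), f(β+1) = ϑ(f(β)), and f(ω·β) = ϑ(Ω+f(β)) for 0 < β with ω·β < ω^ω. -/
universe u

/-- A prae-dilator: an endofunctor of the category of linear orders (with order
embeddings as morphisms), together with a natural family of support functions. -/
structure PraeDilator : Type (u + 1) where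
  obj : LinOrd.{u} → LinOrd.{u}
  map : {X Y : LinOrd.{u}} → (↥X ↪o ↥Y) → (↥(obj X) ↪o ↥(obj Y))
  map_id : ∀ (X : LinOrd.{u}) (σ : ↥(obj X)),
    map (OrderIso.refl ↥X).toOrderEmbedding σ = σ
  map_comp : ∀ {X Y Z : LinOrd.{u}} (f : ↥X ↪o ↥Y) (g : ↥Y ↪o ↥Z) (σ : ↥(obj X)),
    map (f.trans g) σ = map g (map f σ)
  supp : {X : LinOrd.{u}} → ↥(obj X) → Finset ↥X
  supp_natural : ∀ {X Y : LinOrd.{u}} (f : ↥X ↪o ↥Y) (σ : ↥(obj X)),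
    supp (map f σ) = (supp σ).map f.toEmbedding
  supp_spec : ∀ {X : LinOrd.{u}} (σ : ↥(obj X)),
    ∃ σ₀ : ↥(obj (LinOrd.of {x : ↥X // x ∈ supp σ})),
      map (OrderEmbedding.subtype (· ∈ supp σ)) σ₀ = σ

/-- A dilator is a prae-dilator that preserves well-foundedness. -/
def PraeDilator.IsDilator (T : PraeDilator.{u}) : Prop :=
  ∀ X : LinOrd.{u}, WellFounded ((· < ·) : ↥X → ↥X → Prop) →
    WellFounded ((· < ·) : ↥(T.obj X) → ↥(T.obj X) → Prop)

/-- A Bachmann-Howard collapse `ϑ : T_X → X`. -/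
def PraeDilator.IsBHCollapse (T : PraeDilator.{u}) (X : LinOrd.{u})
    (ϑ : ↥(T.obj X) → ↥X) : Prop :=
  (∀ σ τ : ↥(T.obj X), σ < τ → (∀ x ∈ T.supp σ, x < ϑ τ) → ϑ σ < ϑ τ) ∧
  (∀ σ : ↥(T.obj X), ∀ x ∈ T.supp σ, x < ϑ σ)

/-- `X` is a Bachmann-Howard fixed point of `T`. -/
def PraeDilator.IsBHFixedPoint (T : PraeDilator.{u}) (X : LinOrd.{u}) : Prop :=
  ∃ ϑ : ↥(T.obj X) → ↥X, T.IsBHCollapse X ϑ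

noncomputable section

open Ordinal

/-- The carrier of `T_X = {⊥} ∪ X ∪ {Ω + x | x ∈ X}`, realized as
`WithBot (X ⊕ₗ X)`: `⊥` is the bottom element, `Sum.inl x` is `x` and
`Sum.inr x` is `Ω + x`. -/
def TCar (X : LinOrd.{0}) : Type := WithBot (↥X ⊕ₗ ↥X)

instance (X : LinOrd.{0}) : LinearOrder (TCar X) :=
  inferInstanceAs (LinearOrder (WithBot (↥X ⊕ₗ ↥X)))

instance (X : LinOrd.{0}) : Bot (TCar X) :=
  inferInstanceAs (Bot (WithBot (↥X ⊕ₗ ↥X)))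

def TObj (X : LinOrd.{0}) : LinOrd.{0} := LinOrd.of (TCar X)

/-- The action of `T` on an order embedding `f`: `⊥ ↦ ⊥`, `x ↦ f x`,
`Ω + x ↦ Ω + f x`. -/
def Tmap {X Y : LinOrd.{0}} (f : ↥X ↪o ↥Y) : ↥(TObj X) ↪o ↥(TObj Y) :=
  OrderEmbedding.ofStrictMono
    (fun σ => (WithBot.map (fun a => toLex (Sum.map f f (ofLex a))) σ : TCar Y))
    (by
      have hg : StrictMono (fun a : ↥X ⊕ₗ ↥X => (toLex (Sum.map f f (ofLex a)) : ↥Y ⊕ₗ ↥Y)) := by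
        intro a b h
        rw [Sum.Lex.lt_def] at h
        rw [show ∀ c d : ↥Y ⊕ₗ ↥Y, (c < d) = Sum.Lex (· < ·) (· < ·) (ofLex c) (ofLex d) from
          fun _ _ => rfl]
        cases h with
        | inl h => exact Sum.Lex.inl (f.strictMono h)
        | inr h => exact Sum.Lex.inr (f.strictMono h)
        | sep => exact Sum.Lex.sep _ _
      exact hg.withBot_map)

/-- Supports: `supp ⊥ = ∅`, `supp x = supp (Ω + x) = {x}`. -/
def Tsupp {X : LinOrd.{0}} : ↥(TObj X) → Finset ↥X :=
  WithBot.recBotCoe ∅ (fun a => Sum.elim (fun x => {x}) (fun x => {x}) (ofLex a))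

/-- The prae-dilator `T` with `T_X = 1 + X + X`. -/
def T0 : PraeDilator.{0} where
  obj := TObj
  map := Tmap
  map_id := by
    intro X σ
    induction σ using WithBot.recBotCoe with
    | bot => rfl
    | coe a =>
      rw [← toLex_ofLex a]
      rcases ofLex a with x | x
      · rfl
      · rfl
  map_comp := by
    intro X Y Z f g σ
    induction σ using WithBot.recBotCoe with
    | bot => rfl
    | coe a =>
      rw [← toLex_ofLex a]
      rcases ofLex a with x | x
      · rfl
      · rfl
  supp := Tsupp
  supp_natural := by
    intro X Y f σ
    induction σ using WithBot.recBotCoe with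
    | bot => rfl
    | coe a =>
      rw [← toLex_ofLex a]
      rcases ofLex a with x | x
      · exact (Finset.map_singleton _ _).symm
      · exact (Finset.map_singleton _ _).symm
  supp_spec := by
    intro X σ
    induction σ using WithBot.recBotCoe with
    | bot => exact ⟨show TCar _ from ⊥, rfl⟩
    | coe a =>
      rw [← toLex_ofLex a]
      rcases ofLex a with x | x
      · refine ⟨(Option.some (toLex (Sum.inl
            (⟨x, Finset.mem_singleton_self x⟩ : {y : ↥X // y ∈ ({x} : Finset ↥X)}))) :
            WithBot ({y : ↥X // y ∈ ({x} : Finset ↥X)} ⊕ₗ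
              {y : ↥X // y ∈ ({x} : Finset ↥X)})), ?_⟩
        rfl
      · refine ⟨(Option.some (toLex (Sum.inr
            (⟨x, Finset.mem_singleton_self x⟩ : {y : ↥X // y ∈ ({x} : Finset ↥X)}))) :
            WithBot ({y : ↥X // y ∈ ({x} : Finset ↥X)} ⊕ₗ
              {y : ↥X // y ∈ ({x} : Finset ↥X)})), ?_⟩
        rfl

/-- The well-order `ω^ω`. -/
def X0 : LinOrd.{0} := LinOrd.of (omega0 ^ omega0).ToType

def eIso : Set.Iio (omega0 ^ omega0) ≃o (omega0 ^ omega0).ToType :=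
  Ordinal.ToType.mk

lemma aux0 : (0 : Ordinal) < omega0 ^ omega0 :=
  opow_pos _ omega0_pos

lemma auxsucc {β : Ordinal} (h : β < omega0 ^ omega0) : β + 1 < omega0 ^ omega0 :=
  principal_add_omega0_opow _ h
    (by
      calc (1 : Ordinal) < omega0 := one_lt_omega0
        _ ≤ omega0 ^ omega0 := left_le_opow _ omega0_pos)

lemma auxmul {β : Ordinal} (h : β < omega0 ^ omega0) :
    omega0 * (β + 1) < omega0 ^ omega0 := by
  have hω : omega0 < omega0 ^ omega0 := by
    conv_lhs => rw [← opow_one omega0]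
    exact (opow_lt_opow_iff_right one_lt_omega0).2 one_lt_omega0
  have hp := principal_mul_omega0_opow_opow 1
  rw [opow_one] at hp
  exact hp hω (auxsucc h)
/-! The embedding is `g : Ordinal → X` given by the recursion of the statement. It is strictly
monotone below `ω ^ ω` by induction on the larger argument `γ`. For `γ = α + 1`, axiom (ii)
gives `g α < ϑ (g α)`. For `γ = ω * c`, a second induction shows `g β < ϑ (Ω + g c)` for all
`β < ω * c`, using axiom (i) along `⊥ < x < Ω + y`; the case `β = ω * d` needs `g d < g c`,
which is the outer hypothesis since `d < c`. -/

namespace Ordinal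

lemma lt_omega0_mul_self {β : Ordinal} (h0 : β ≠ 0) (hβ : β < ω ^ ω) : β < ω * β := by
  refine (le_mul_right β omega0_pos).lt_of_ne fun h => ?_
  exact (le_of_dvd h0 (mul_eq_right_iff_opow_omega0_dvd.1 h.symm)).not_gt hβ

lemma eq_zero_or_eq_add_one_or_eq_omega0_mul {β : Ordinal} (hβ : β < ω ^ ω) :
    β = 0 ∨ (∃ a, β = a + 1) ∨ ∃ c, 0 < c ∧ c < β ∧ β = ω * c := by
  rcases zero_or_succ_or_isSuccLimit β with h | ⟨a, rfl⟩ | h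
  · exact Or.inl h
  · exact Or.inr (Or.inl ⟨a, Order.succ_eq_add_one a⟩)
  · obtain ⟨c, rfl⟩ := isSuccPrelimit_iff_omega0_dvd.1 h.isSuccPrelimit
    have hc0 : c ≠ 0 := by rintro rfl; exact h.ne_bot (mul_zero ω)
    have hcβ : c < ω ^ ω := (le_mul_right c omega0_pos).trans_lt hβ
    exact Or.inr (Or.inr ⟨c, pos_iff_ne_zero.2 hc0, lt_omega0_mul_self hc0 hcβ, rfl⟩)

end Ordinal

namespace TCar

variable {X : LinOrd.{0}}

def ofElem (x : ↥X) : TCar X :=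
  (Option.some (toLex (Sum.inl x : ↥X ⊕ ↥X)) : WithBot (↥X ⊕ₗ ↥X))

def omegaAdd (x : ↥X) : TCar X :=
  (Option.some (toLex (Sum.inr x : ↥X ⊕ ↥X)) : WithBot (↥X ⊕ₗ ↥X))

lemma bot_lt_omegaAdd (x : ↥X) : (⊥ : TCar X) < omegaAdd x :=
  WithBot.bot_lt_coe _

lemma ofElem_lt_omegaAdd (x y : ↥X) : ofElem x < omegaAdd y :=
  WithBot.coe_lt_coe.2 (Sum.Lex.sep x y)

lemma omegaAdd_lt_omegaAdd {x y : ↥X} (h : x < y) : omegaAdd x < omegaAdd y :=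
  WithBot.coe_lt_coe.2 (Sum.Lex.inr h)

@[simp]
lemma supp_bot : T0.supp (X := X) (⊥ : TCar X) = ∅ := rfl

@[simp]
lemma supp_ofElem (x : ↥X) : T0.supp (X := X) (ofElem x) = {x} := rfl

@[simp]
lemma supp_omegaAdd (x : ↥X) : T0.supp (X := X) (omegaAdd x) = {x} := rfl

end TCar

open TCar

namespace PraeDilator.IsBHCollapse

variable {X : LinOrd.{0}} {ϑ : ↥(T0.obj X) → ↥X} (hϑ : T0.IsBHCollapse X ϑ)
include hϑ

lemma lt_theta_ofElem (x : ↥X) : x < ϑ (ofElem x) :=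
  hϑ.2 (ofElem x) x (by simp)

lemma theta_bot_lt_theta_omegaAdd (y : ↥X) : ϑ (⊥ : TCar X) < ϑ (omegaAdd y) :=
  hϑ.1 _ _ (bot_lt_omegaAdd y) (by simp)

lemma theta_ofElem_lt_theta_omegaAdd {x y : ↥X} (h : x < ϑ (omegaAdd y)) :
    ϑ (ofElem x) < ϑ (omegaAdd y) :=
  hϑ.1 _ _ (ofElem_lt_omegaAdd x y) (by simpa using h)

lemma theta_omegaAdd_lt_theta_omegaAdd {x y : ↥X} (hxy : x < y) (h : x < ϑ (omegaAdd y)) :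
    ϑ (omegaAdd x) < ϑ (omegaAdd y) :=
  hϑ.1 _ _ (omegaAdd_lt_omegaAdd hxy) (by simpa using h)

end PraeDilator.IsBHCollapse

section ThetaRec

variable (X : LinOrd.{0}) (ϑ : ↥(T0.obj X) → ↥X)

-- The last branch is taken at `0` (and at the multiples of `ω ^ ω`, which are never used).
def thetaRec : Ordinal → ↥X := fun β =>
  if _ : pred β < β then ϑ (ofElem (thetaRec (pred β)))
  else if _ : β / ω < β then ϑ (omegaAdd (thetaRec (β / ω)))
  else ϑ (⊥ : TCar X)
termination_by β => β

lemma thetaRec_zero : thetaRec X ϑ 0 = ϑ (⊥ : TCar X) := by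
  rw [thetaRec, dif_neg (by simp), dif_neg (by simp)]

lemma thetaRec_add_one (β : Ordinal) :
    thetaRec X ϑ (β + 1) = ϑ (ofElem (thetaRec X ϑ β)) := by
  rw [thetaRec, dif_pos (by simp), pred_add_one]

lemma thetaRec_omega0_mul {c : Ordinal} (hc : 0 < c) (h : ω * c < ω ^ ω) :
    thetaRec X ϑ (ω * c) = ϑ (omegaAdd (thetaRec X ϑ c)) := by
  have hcω : c < ω * c := lt_omega0_mul_self hc.ne' ((le_mul_right c omega0_pos).trans_lt h)
  have hpred : pred (ω * c) = ω * c :=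
    pred_eq_iff_isSuccPrelimit.2 (isSuccPrelimit_iff_omega0_dvd.2 (dvd_mul_right ω c))
  rw [thetaRec, dif_neg (by rw [hpred]; exact lt_irrefl _), mul_div_cancel c omega0_ne_zero,
    dif_pos hcω]

variable {X ϑ} (hϑ : T0.IsBHCollapse X ϑ)
include hϑ

lemma thetaRec_lt_theta_omegaAdd {c : Ordinal} (hc : ω * c < ω ^ ω)
    (hmono : ∀ d < c, thetaRec X ϑ d < thetaRec X ϑ c) :
    ∀ β < ω * c, thetaRec X ϑ β < ϑ (omegaAdd (thetaRec X ϑ c)) := by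
  intro β
  induction β using WellFoundedLT.induction with
  | _ β IH =>
    intro hβ
    rcases eq_zero_or_eq_add_one_or_eq_omega0_mul (hβ.trans hc) with
      rfl | ⟨b, rfl⟩ | ⟨d, hd0, hdβ, rfl⟩
    · rw [thetaRec_zero]
      exact hϑ.theta_bot_lt_theta_omegaAdd _
    · rw [thetaRec_add_one]
      exact hϑ.theta_ofElem_lt_theta_omegaAdd (IH b (lt_add_one b) ((lt_add_one b).trans hβ))
    · rw [thetaRec_omega0_mul X ϑ hd0 (hβ.trans hc)]
      have hdc : d < c := lt_of_mul_lt_mul_left' hβ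
      exact hϑ.theta_omegaAdd_lt_theta_omegaAdd (hmono d hdc) (IH d hdβ (hdβ.trans hβ))

lemma thetaRec_strictMonoOn : StrictMonoOn (thetaRec X ϑ) (Set.Iio (ω ^ ω)) := by
  suffices h : ∀ γ < ω ^ ω, ∀ β < γ, thetaRec X ϑ β < thetaRec X ϑ γ from
    fun β _ γ hγ hβγ => h γ hγ β hβγ
  intro γ
  induction γ using WellFoundedLT.induction with
  | _ γ IH =>
    intro hγ β hβ
    rcases eq_zero_or_eq_add_one_or_eq_omega0_mul hγ with rfl | ⟨a, rfl⟩ | ⟨c, hc0, hcγ, rfl⟩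
    · exact absurd hβ (not_lt_zero (a := β))
    · rw [thetaRec_add_one]
      have ha : thetaRec X ϑ a < ϑ (ofElem (thetaRec X ϑ a)) := hϑ.lt_theta_ofElem _
      rcases (Order.lt_add_one_iff.1 hβ).lt_or_eq with hβa | rfl
      · exact (IH a (lt_add_one a) ((lt_add_one a).trans hγ) β hβa).trans ha
      · exact ha
    · rw [thetaRec_omega0_mul X ϑ hc0 hγ]
      exact thetaRec_lt_theta_omegaAdd hϑ hγ (IH c hcγ (hcγ.trans hγ)) β hβ

end ThetaRec

/-- from any Bachmann-Howard collapse `ϑ : T_X → X` for the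
prae-dilator `T` with `T_X = 1 + X + X` one obtains an order embedding of
`ω^ω` into `X`, defined by recursion via `f(0) = ϑ(⊥)`, `f(β+1) = ϑ(f(β))` and
`f(ω·β) = ϑ(Ω + f(β))` for `0 < β`. -/
theorem stmt_1 (X : LinOrd.{0}) (ϑ : ↥(T0.obj X) → ↥X)
    (hϑ : T0.IsBHCollapse X ϑ) :
    ∃ f : ↥X0 ↪o ↥X,
      (f (eIso ⟨0, aux0⟩) = ϑ (show TCar X from ⊥)) ∧
      (∀ (β : Ordinal) (hβ : β < omega0 ^ omega0),
        f (eIso ⟨β + 1, auxsucc hβ⟩) =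
          ϑ (Option.some (toLex ((Sum.inl (f (eIso ⟨β, hβ⟩))) : ↥X ⊕ ↥X)) : WithBot (↥X ⊕ₗ ↥X))) ∧
      (∀ (β : Ordinal) (hβ : β < omega0 ^ omega0), 0 < β →
        ∀ hm : omega0 * β < omega0 ^ omega0,
          f (eIso ⟨omega0 * β, hm⟩) =
            ϑ (Option.some (toLex ((Sum.inr (f (eIso ⟨β, hβ⟩))) : ↥X ⊕ ↥X)) : WithBot (↥X ⊕ₗ ↥X))) := by
  let f : ↥X0 ↪o ↥X := OrderEmbedding.ofStrictMono (fun t => thetaRec X ϑ (eIso.symm t))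
    fun s t hst => thetaRec_strictMonoOn hϑ (eIso.symm s).2 (eIso.symm t).2
      (eIso.symm.strictMono hst)
  have hf (β : Ordinal) (hβ : β < ω ^ ω) : f (eIso ⟨β, hβ⟩) = thetaRec X ϑ β := by
    change thetaRec X ϑ (eIso.symm (eIso _)) = _
    rw [OrderIso.symm_apply_apply]
  refine ⟨f, ?_, fun β hβ => ?_, fun β hβ hβ0 hm => ?_⟩
  · rw [hf]
    exact thetaRec_zero X ϑ
  · rw [hf, hf]
    exact thetaRec_add_one X ϑ β
  · rw [hf, hf]
    exact thetaRec_omega0_mul X ϑ hβ0 hm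

end
end

section
/- Let (T, supp^T) be a dilator and let κ be an uncountable regular cardinal such that for every ordinal β < κ the well-order T_β (the value of T at β regarded as a well-order) has cardinality less than κ. Then κ is a Bachmann-Howard fixed point of T, i.e. there exists a Bachmann-Howard collapse ϑ : T_κ → κ; it can be defined by recursion along the well-order T_κ via ϑ(τ) = min{β < κ : C(τ,β) ⊆ β}, where C(τ,β) = supp^T_κ(τ) ∪ {ϑ(σ) : σ <_{T_κ} τ and supp^T_κ(σ) ⊆ β}. -/
universe u

/-!
Since `T` is a dilator, `T_κ` is well-founded and `ϑ` can be defined by recursion along it, once we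
know that every `τ` admits some `β < κ` with `C(τ, β) ⊆ β`. Such a `β` is found by closing the
support of `τ` under the finitary rules "from `supp σ ⊆ β` infer `ϑ(σ)`", in `ω` steps: an element
of `T_κ` with support below `β` comes from `T_β`, so fewer than `κ` rules apply at each step and
regularity keeps every step below `κ`; as supports are finite, the supremum of the `ω` steps is
closed, and it is still below `κ` because `κ` has uncountable cofinality. Both collapsing
conditions are then just the statement that `ϑ(τ)` itself satisfies `C(τ, ϑ(τ)) ⊆ ϑ(τ)`.
-/

open Cardinal Ordinal Order

theorem Cardinal.IsRegular.exists_closed_lt_ord {κ : Cardinal.{u}} (hκ : κ.IsRegular)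
    (hκω : ℵ₀ < κ) {ι : Type u} (prem : ι → Finset Ordinal.{u}) (concl : ι → Ordinal.{u})
    (hconcl : ∀ i, concl i < κ.ord)
    (hsmall : ∀ β < κ.ord, #{i // ∀ p ∈ prem i, p < β} < κ) {a : Ordinal.{u}}
    (ha : a < κ.ord) :
    ∃ β < κ.ord, a ≤ β ∧ ∀ i, (∀ p ∈ prem i, p < β) → concl i < β := by
  let f : Ordinal.{u} → Ordinal.{u} := fun β =>
    max β (⨆ i : {i // ∀ p ∈ prem i, p < β}, succ (concl i.1))
  have hf : ∀ β < κ.ord, f β < κ.ord := fun β hβ =>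
    max_lt hβ <| iSup_lt_of_lt_cof (hκ.cof_ord.symm ▸ hsmall β hβ) fun i =>
      (isSuccLimit_ord hκω.le).succ_lt (hconcl i)
  have hmono : Monotone fun n => f^[n] a :=
    fun m n hmn => Function.monotone_iterate_of_id_le (fun β => le_max_left _ _) hmn a
  refine ⟨nfp f a, nfp_lt_ord_of_isRegular hκ hκω.ne' hf ha, le_nfp f a, fun i hi => ?_⟩
  obtain ⟨n, hn⟩ : ∃ n, ∀ p ∈ prem i, p < f^[n] a := by
    choose! m hm using fun p hp => lt_nfp_iff.1 (hi p hp)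
    exact ⟨(prem i).sup m, fun p hp => (hm p hp).trans_le (hmono (Finset.le_sup hp))⟩
  calc concl i < succ (concl i) := lt_succ _
    _ ≤ f (f^[n] a) :=
      (Ordinal.le_iSup (fun j : {j // ∀ p ∈ prem j, p < f^[n] a} => succ (concl j.1))
        ⟨i, hn⟩).trans (le_max_right _ _)
    _ ≤ nfp f a := by
      rw [← Function.iterate_succ_apply' f n a]
      exact iterate_le_nfp f a (n + 1)

namespace PraeDilator

variable (T : PraeDilator.{u})

theorem mem_range_map_subtype {X : LinOrd.{u}} (P : X → Prop) {σ : T.obj X}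
    (hσ : ∀ x ∈ T.supp σ, P x) :
    σ ∈ Set.range (T.map (X := LinOrd.of {x // P x}) (OrderEmbedding.subtype P)) := by
  obtain ⟨σ₀, hσ₀⟩ := T.supp_spec σ
  let j : {x // x ∈ T.supp σ} ↪o {x // P x} :=
    OrderEmbedding.ofStrictMono (fun x => ⟨x.1, hσ x.1 x.2⟩) fun _ _ h => h
  exact ⟨T.map j σ₀, by rw [← T.map_comp]; exact hσ₀⟩

theorem mk_subtype_supp_le {X Y : LinOrd.{u}} (P : X → Prop) (f : {x // P x} ↪o Y) :
    #{σ : T.obj X // ∀ x ∈ T.supp σ, P x} ≤ #(T.obj Y) :=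
  calc #{σ : T.obj X // ∀ x ∈ T.supp σ, P x}
      ≤ #(Set.range (T.map (X := LinOrd.of {x // P x}) (OrderEmbedding.subtype P))) :=
        mk_le_mk_of_subset fun _ => T.mem_range_map_subtype P
    _ ≤ #(T.obj (LinOrd.of {x // P x})) := mk_range_le
    _ ≤ #(T.obj Y) := mk_le_of_injective (T.map f).injective

theorem mk_subtype_supp_lt_le (o β : Ordinal.{u}) :
    #{σ : T.obj (LinOrd.of o.ToType) // ∀ x ∈ T.supp σ, (ToType.mk.symm x : Ordinal) < β} ≤
      #(T.obj (LinOrd.of β.ToType)) :=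
  T.mk_subtype_supp_le _ <| OrderEmbedding.ofStrictMono (fun x => ToType.mk ⟨_, x.2⟩)
    fun _ _ h => ToType.mk.strictMono ((ToType.mk (o := o)).symm.strictMono h)

section Collapse

variable (κ : Cardinal.{u})

/-- The ordinals `β < κ` with `C(τ, β) ⊆ β`, where `v σ` stands for the value `ϑ(σ)`. -/
def collapseBounds (τ : T.obj (LinOrd.of κ.ord.ToType))
    (v : T.obj (LinOrd.of κ.ord.ToType) → Ordinal.{u}) : Set Ordinal.{u} :=
  {β | β < κ.ord ∧ ∀ γ ∈ {γ | ∃ x ∈ T.supp τ, γ = (ToType.mk.symm x : Ordinal)} ∪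
    {γ | ∃ σ, σ < τ ∧ (∀ x ∈ T.supp σ, (ToType.mk.symm x : Ordinal) < β) ∧ γ = v σ}, γ < β}

variable {T κ}

theorem mem_collapseBounds {τ : T.obj (LinOrd.of κ.ord.ToType)}
    {v : T.obj (LinOrd.of κ.ord.ToType) → Ordinal.{u}} {β : Ordinal.{u}} :
    β ∈ T.collapseBounds κ τ v ↔ β < κ.ord ∧
      (∀ x ∈ T.supp τ, (ToType.mk.symm x : Ordinal) < β) ∧
      ∀ σ < τ, (∀ x ∈ T.supp σ, (ToType.mk.symm x : Ordinal) < β) → v σ < β := by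
  simp only [collapseBounds, Set.mem_ofPred_eq, Set.mem_union, or_imp, forall_and]
  aesop

theorem collapseBounds_congr {τ : T.obj (LinOrd.of κ.ord.ToType)}
    {v w : T.obj (LinOrd.of κ.ord.ToType) → Ordinal.{u}} (h : ∀ σ < τ, v σ = w σ) :
    T.collapseBounds κ τ v = T.collapseBounds κ τ w := by
  ext β
  simp +contextual [mem_collapseBounds, h]

theorem collapseBounds_nonempty (hreg : κ.IsRegular) (hκ : ℵ₀ < κ)
    (hsmall : ∀ β < κ.ord, #(T.obj (LinOrd.of β.ToType)) < κ)
    (τ : T.obj (LinOrd.of κ.ord.ToType)) {v : T.obj (LinOrd.of κ.ord.ToType) → Ordinal.{u}}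
    (hv : ∀ σ < τ, v σ < κ.ord) : (T.collapseBounds κ τ v).Nonempty := by
  have hsucc : ∀ x : κ.ord.ToType, succ (ToType.mk.symm x : Ordinal) < κ.ord :=
    fun x => (isSuccLimit_ord hκ.le).succ_lt (ToType.mk.symm x).2
  have hcard : ∀ β < κ.ord, #{σ : {σ // σ < τ} //
      ∀ p ∈ (T.supp σ.1).image fun x => (ToType.mk.symm x : Ordinal), p < β} < κ := fun β hβ =>
    calc _ ≤ #{σ : T.obj (LinOrd.of κ.ord.ToType) //
            ∀ x ∈ T.supp σ, (ToType.mk.symm x : Ordinal) < β} :=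
          mk_le_of_injective (f := fun σ => ⟨σ.1.1, by simpa using σ.2⟩)
            fun _ _ h => by simpa [Subtype.ext_iff] using h
      _ ≤ #(T.obj (LinOrd.of β.ToType)) := T.mk_subtype_supp_lt_le _ _
      _ < κ := hsmall β hβ
  obtain ⟨β, hβκ, hτβ, hclosed⟩ := hreg.exists_closed_lt_ord hκ _ (fun σ : {σ // σ < τ} => v σ)
    (fun σ => hv σ σ.2) hcard
    (a := (T.supp τ).sup fun x => succ (ToType.mk.symm x : Ordinal))
    ((Finset.sup_lt_iff (bot_lt_iff_ne_bot.2 (ord_pos.2 (aleph0_pos.trans hκ)).ne')).2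
      fun x _ => hsucc x)
  refine ⟨β, mem_collapseBounds.2 ⟨hβκ, fun x hx => ?_, fun σ hστ hσβ => ?_⟩⟩
  · exact (lt_succ _).trans_le
      ((Finset.le_sup (f := fun x => succ (ToType.mk.symm x : Ordinal)) hx).trans hτβ)
  · exact hclosed ⟨σ, hστ⟩ (by simpa using hσβ)

variable (T κ)

/-- The dummy value `0` is harmless: `collapseBounds κ τ v` only reads `v` below `τ`. -/
noncomputable def collapseOrd (hT : T.IsDilator) : T.obj (LinOrd.of κ.ord.ToType) → Ordinal.{u} :=
  (hT (LinOrd.of κ.ord.ToType) wellFounded_lt).fix fun τ ih =>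
    sInf (T.collapseBounds κ τ fun σ => if h : σ < τ then ih σ h else 0)

variable {T κ}

theorem collapseOrd_eq (hT : T.IsDilator) (τ : T.obj (LinOrd.of κ.ord.ToType)) :
    T.collapseOrd κ hT τ = sInf (T.collapseBounds κ τ (T.collapseOrd κ hT)) := by
  rw [collapseOrd, WellFounded.fix_eq]
  exact congrArg sInf (collapseBounds_congr fun σ h => dif_pos h)

theorem collapseOrd_mem (hT : T.IsDilator) (hreg : κ.IsRegular) (hκ : ℵ₀ < κ)
    (hsmall : ∀ β < κ.ord, #(T.obj (LinOrd.of β.ToType)) < κ)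
    (τ : T.obj (LinOrd.of κ.ord.ToType)) :
    T.collapseOrd κ hT τ ∈ T.collapseBounds κ τ (T.collapseOrd κ hT) := by
  induction τ using (hT (LinOrd.of κ.ord.ToType) wellFounded_lt).induction with
  | _ τ ih =>
    rw [collapseOrd_eq]
    exact csInf_mem <| collapseBounds_nonempty hreg hκ hsmall τ fun σ hσ =>
      (mem_collapseBounds.1 (ih σ hσ)).1

theorem isBHCollapse_of_mem_collapseBounds
    (ϑ : T.obj (LinOrd.of κ.ord.ToType) → LinOrd.of κ.ord.ToType)
    (hϑ : ∀ τ, (ToType.mk.symm (ϑ τ) : Ordinal) ∈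
      T.collapseBounds κ τ fun σ => (ToType.mk.symm (ϑ σ) : Ordinal)) :
    T.IsBHCollapse _ ϑ := by
  have hlt : ∀ a b : κ.ord.ToType, (ToType.mk.symm a : Ordinal) < ToType.mk.symm b ↔ a < b :=
    fun a b => Subtype.coe_lt_coe.trans (OrderIso.lt_iff_lt _)
  refine ⟨fun σ τ hστ hσ => ?_, fun σ x hx => ?_⟩
  · exact (hlt _ _).1 <| (mem_collapseBounds.1 (hϑ τ)).2.2 σ hστ fun x hx => (hlt _ _).2 (hσ x hx)
  · exact (hlt _ _).1 <| (mem_collapseBounds.1 (hϑ σ)).2.1 x hx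

end Collapse

end PraeDilator

open Cardinal Ordinal in
/-- a regular uncountable cardinal `κ` such that `T` has values of
cardinality `< κ` at all ordinals `β < κ` is a Bachmann-Howard fixed point of the
dilator `T`, via the collapse `ϑ(τ) = min {β < κ : C(τ,β) ⊆ β}`. -/
theorem stmt_4 (T : PraeDilator.{0}) (hT : T.IsDilator)
    (κ : Cardinal.{0}) (hreg : κ.IsRegular) (huncount : Cardinal.aleph0 < κ)
    (hsmall : ∀ β : Ordinal.{0}, β < κ.ord →
      Cardinal.mk ↥(T.obj (LinOrd.of β.ToType)) < κ) :
    -- the ordinal `κ` regarded as a well-order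
    letI K : LinOrd.{0} := LinOrd.of κ.ord.ToType
    -- `ordOf` identifies elements of that well-order with ordinals `< κ`
    letI ordOf : ↥K → Ordinal.{0} := fun a => ((ToType.mk (o := κ.ord)).symm a : Ordinal)
    ∃ ϑ : ↥(T.obj K) → ↥K,
      T.IsBHCollapse K ϑ ∧
      ∀ τ : ↥(T.obj K),
        letI C : Ordinal.{0} → Set Ordinal.{0} := fun β =>
          {γ | ∃ x ∈ T.supp τ, γ = ordOf x} ∪
          {γ | ∃ σ : ↥(T.obj K), σ < τ ∧ (∀ x ∈ T.supp σ, ordOf x < β) ∧ γ = ordOf (ϑ σ)}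
        ordOf (ϑ τ) = sInf {β : Ordinal.{0} | β < κ.ord ∧ ∀ γ ∈ C β, γ < β} := by
  have hmem := T.collapseOrd_mem hT hreg huncount hsmall
  let ϑ : T.obj (LinOrd.of κ.ord.ToType) → κ.ord.ToType := fun τ =>
    ToType.mk ⟨T.collapseOrd κ hT τ, (PraeDilator.mem_collapseBounds.1 (hmem τ)).1⟩
  have hϑτ (τ) : (ToType.mk.symm (ϑ τ) : Ordinal) = T.collapseOrd κ hT τ :=
    congrArg Subtype.val (ToType.mk.symm_apply_apply _)
  have hϑ : (fun τ => (ToType.mk.symm (ϑ τ) : Ordinal)) = T.collapseOrd κ hT := funext hϑτ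
  refine ⟨ϑ, T.isBHCollapse_of_mem_collapseBounds ϑ fun τ => ?_, fun τ => ?_⟩
  · rw [hϑτ, hϑ]
    exact hmem τ
  · beta_reduce
    rw [hϑτ, T.collapseOrd_eq hT, ← hϑ]
    rfl
end
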